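/- arXiv:2410.07623 — 5 statements merged into one kernel-verified Lean document; each statement's English description precedes it below -/
import Mathlib

section
/- Let X be a non-zero real normed linear space and let x, y ∈ X. Then x ⊥₁ y if and only if ‖x + y‖ = ‖x‖ + ‖y‖ and ‖x − y‖ = ‖x‖ + ‖y‖. -/
/-- `x` is 1-orthogonal to `y`: `‖x + k y‖ = ‖x‖ + ‖k y‖` for all `k ∈ ℝ`. -/
def PerpOne {X : Type*} [NormedAddCommGroup X] [NormedSpace ℝ X] (x y : X) : Prop :=
  ∀ k : ℝ, ‖x + k • y‖ = ‖x‖ + ‖k • y‖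

/-! Equality in the triangle inequality for `x, y` propagates to `x, k • y` for every `k ≥ 0`:
for `k ≤ 1` write `x + y = (x + k • y) + (1 - k) • y`, and for `k ≥ 1` factor out `k` and swap
the roles of `x` and `y`. Applied to `y` and to `-y`, this covers all real `k`. -/

section

variable {X : Type*} [SeminormedAddCommGroup X] [NormedSpace ℝ X] {x y : X} {k : ℝ}

lemma norm_add_smul_eq_of_norm_add_eq_of_le_one (h : ‖x + y‖ = ‖x‖ + ‖y‖) (hk₀ : 0 ≤ k)
    (hk₁ : k ≤ 1) : ‖x + k • y‖ = ‖x‖ + k * ‖y‖ := by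
  have hle : ‖x + k • y‖ ≤ ‖x‖ + k * ‖y‖ := by
    simpa [norm_smul, abs_of_nonneg hk₀] using norm_add_le x (k • y)
  have hge : ‖x‖ + ‖y‖ ≤ ‖x + k • y‖ + (1 - k) * ‖y‖ :=
    calc ‖x‖ + ‖y‖ = ‖(x + k • y) + (1 - k) • y‖ := by rw [← h]; congr 1; module
      _ ≤ ‖x + k • y‖ + ‖(1 - k) • y‖ := norm_add_le _ _
      _ = ‖x + k • y‖ + (1 - k) * ‖y‖ := by
        rw [norm_smul, Real.norm_of_nonneg (sub_nonneg.2 hk₁)]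
  linarith

lemma norm_add_smul_eq_of_norm_add_eq (h : ‖x + y‖ = ‖x‖ + ‖y‖) (hk : 0 ≤ k) :
    ‖x + k • y‖ = ‖x‖ + ‖k • y‖ := by
  rw [norm_smul, Real.norm_of_nonneg hk]
  rcases le_total k 1 with hk₁ | hk₁
  · exact norm_add_smul_eq_of_norm_add_eq_of_le_one h hk hk₁
  · have hk₀ : 0 < k := by linarith
    have hyx := norm_add_smul_eq_of_norm_add_eq_of_le_one (x := y) (y := x)
      (by rw [add_comm, h, add_comm]) (inv_nonneg.2 hk) (inv_le_one_of_one_le₀ hk₁)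
    calc ‖x + k • y‖ = ‖k • (y + k⁻¹ • x)‖ := by congr 1; match_scalars <;> field_simp
      _ = ‖x‖ + k * ‖y‖ := by
        rw [norm_smul, Real.norm_of_nonneg hk, hyx]; field_simp; ring

end

theorem perpOne_iff_general {X : Type*} [NormedAddCommGroup X] [NormedSpace ℝ X]
    (x y : X) :
    PerpOne x y ↔ (‖x + y‖ = ‖x‖ + ‖y‖ ∧ ‖x - y‖ = ‖x‖ + ‖y‖) := by
  refine ⟨fun h ↦ ⟨by simpa using h 1, by simpa [sub_eq_add_neg] using h (-1)⟩, ?_⟩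
  rintro ⟨hadd, hsub⟩ k
  rcases le_total 0 k with hk | hk
  · exact norm_add_smul_eq_of_norm_add_eq hadd hk
  · have hneg : ‖x + -y‖ = ‖x‖ + ‖-y‖ := by rwa [← sub_eq_add_neg, norm_neg]
    simpa using norm_add_smul_eq_of_norm_add_eq hneg (neg_nonneg.2 hk)

theorem perpOne_iff {X : Type*} [NormedAddCommGroup X] [NormedSpace ℝ X] [Nontrivial X]
    (x y : X) :
    PerpOne x y ↔ (‖x + y‖ = ‖x‖ + ‖y‖ ∧ ‖x - y‖ = ‖x‖ + ‖y‖) :=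
  perpOne_iff_general x y
end

section
/- Let X be a non-zero real normed linear space and let x, y ∈ X with x ≠ 0 and y ≠ 0. If x ⊥₁ y, then (‖x‖⁻¹ x + ‖y‖⁻¹ y) ⊥∞ (‖x‖⁻¹ x − ‖y‖⁻¹ y). -/
/-- `x` is ∞-orthogonal to `y`: `‖x + k y‖ = max {‖x‖, ‖k y‖}` for all `k ∈ ℝ`. -/
def PerpInf {X : Type*} [NormedAddCommGroup X] [NormedSpace ℝ X] (x y : X) : Prop :=
  ∀ k : ℝ, ‖x + k • y‖ = max ‖x‖ ‖k • y‖

theorem abs_add_add_abs_sub_eq_two_mul_max (a b : ℝ) :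
    |a + b| + |a - b| = 2 * max |a| |b| := by
  rcases max_cases |a| |b| with ⟨hmax, hle⟩ | ⟨hmax, hle⟩ <;> rw [hmax] <;>
    cases abs_cases a <;> cases abs_cases b <;> cases abs_cases (a + b) <;>
    cases abs_cases (a - b) <;> linarith

section

variable {X : Type*} [NormedAddCommGroup X] [NormedSpace ℝ X]

theorem PerpOne.norm_smul_add_smul {x y : X} (h : PerpOne x y) (a b : ℝ) :
    ‖a • x + b • y‖ = ‖a • x‖ + ‖b • y‖ := by
  rcases eq_or_ne a 0 with rfl | ha
  · simp
  calc ‖a • x + b • y‖ = |a| * ‖x + (b / a) • y‖ := by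
        rw [← Real.norm_eq_abs, ← norm_smul, smul_add, smul_smul, mul_div_cancel₀ _ ha]
    _ = ‖a • x‖ + ‖b • y‖ := by
        rw [h, norm_smul, norm_smul, norm_smul, Real.norm_eq_abs, Real.norm_eq_abs,
          Real.norm_eq_abs, abs_div]
        field_simp

theorem PerpOne.norm_smul_add_smul_normalize {x y : X} (hx : x ≠ 0) (hy : y ≠ 0)
    (h : PerpOne x y) (a b : ℝ) :
    ‖a • (‖x‖⁻¹ • x) + b • (‖y‖⁻¹ • y)‖ = |a| + |b| := by
  rw [smul_smul, smul_smul, h.norm_smul_add_smul, norm_smul, norm_smul, Real.norm_eq_abs,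
    Real.norm_eq_abs, abs_mul, abs_mul, abs_inv, abs_inv, abs_norm, abs_norm,
    inv_mul_cancel_right₀ (norm_ne_zero_iff.mpr hx),
    inv_mul_cancel_right₀ (norm_ne_zero_iff.mpr hy)]

theorem perpInf_add_sub_of_norm_smul_add_smul {u v : X}
    (h : ∀ a b : ℝ, ‖a • u + b • v‖ = |a| + |b|) : PerpInf (u + v) (u - v) := by
  intro k
  have hsum : u + v + k • (u - v) = (1 + k) • u + (1 - k) • v := by module
  have hdiff : k • (u - v) = k • u + (-k) • v := by module
  have hone : u + v = (1 : ℝ) • u + (1 : ℝ) • v := by module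
  rw [hsum, hdiff, hone, h, h, h, abs_add_add_abs_sub_eq_two_mul_max, abs_neg, abs_one,
    ← two_mul, ← two_mul, mul_max_of_nonneg _ _ zero_le_two, mul_one]

end

theorem perpOne_to_perpInf_general {X : Type*} [NormedAddCommGroup X] [NormedSpace ℝ X]
    (x y : X) (hx : x ≠ 0) (hy : y ≠ 0) (h : PerpOne x y) :
    PerpInf (‖x‖⁻¹ • x + ‖y‖⁻¹ • y) (‖x‖⁻¹ • x - ‖y‖⁻¹ • y) :=
  perpInf_add_sub_of_norm_smul_add_smul (h.norm_smul_add_smul_normalize hx hy)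

theorem perpOne_to_perpInf {X : Type*} [NormedAddCommGroup X] [NormedSpace ℝ X] [Nontrivial X]
    (x y : X) (hx : x ≠ 0) (hy : y ≠ 0) (h : PerpOne x y) :
    PerpInf (‖x‖⁻¹ • x + ‖y‖⁻¹ • y) (‖x‖⁻¹ • x - ‖y‖⁻¹ • y) :=
  perpOne_to_perpInf_general x y hx hy h
end

section
/- Let X be a non-zero real normed linear space and let x, y ∈ X with x ≠ 0 and y ≠ 0. Then x ⊥∞ y if and only if ‖‖x‖⁻¹ x + ‖y‖⁻¹ y‖ = 1 and ‖‖x‖⁻¹ x − ‖y‖⁻¹ y‖ = 1. -/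
lemma abs_add_add_abs_sub_le_two_mul_max (a c : ℝ) : |a + c| + |a - c| ≤ 2 * max |a| |c| := by
  cases abs_cases a <;> cases abs_cases c <;> cases abs_cases (a + c) <;>
    cases abs_cases (a - c) <;> cases max_cases |a| |c| <;> linarith

namespace PerpInf

variable {X : Type*} [NormedAddCommGroup X] [NormedSpace ℝ X] {x y : X}

lemma smul_right_iff {b : ℝ} (hb : b ≠ 0) : PerpInf x (b • y) ↔ PerpInf x y := by
  refine ⟨fun h k => ?_, fun h k => ?_⟩
  · simpa [smul_smul, div_mul_cancel₀ k hb] using h (k / b)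
  · simpa [smul_smul] using h (k * b)

lemma smul_left_iff {a : ℝ} (ha : a ≠ 0) : PerpInf (a • x) y ↔ PerpInf x y := by
  have hsum (k : ℝ) : ‖a • x + k • y‖ = |a| * ‖x + (k / a) • y‖ := by
    rw [← Real.norm_eq_abs, ← norm_smul, smul_add, smul_smul, mul_div_cancel₀ k ha]
  have hmax (k : ℝ) : max ‖a • x‖ ‖k • y‖ = |a| * max ‖x‖ ‖(k / a) • y‖ := by
    rw [mul_max_of_nonneg _ _ (abs_nonneg a), ← Real.norm_eq_abs, ← norm_smul, ← norm_smul,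
      smul_smul, mul_div_cancel₀ k ha]
  refine ⟨fun h k => ?_, fun h k => by rw [hsum, hmax, h]⟩
  have := h (a * k)
  rw [hsum, hmax, mul_div_cancel_left₀ k ha] at this
  exact mul_left_cancel₀ (abs_ne_zero.mpr ha) this

end PerpInf

section UnitVectors

variable {X : Type*} [NormedAddCommGroup X] [NormedSpace ℝ X] {u v : X}

lemma norm_smul_add_smul_le_max (h₁ : ‖u + v‖ ≤ 1) (h₂ : ‖u - v‖ ≤ 1) (a c : ℝ) :
    ‖a • u + c • v‖ ≤ max |a| |c| :=
  calc ‖a • u + c • v‖ = ‖((a + c) / 2) • (u + v) + ((a - c) / 2) • (u - v)‖ := by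
        congr 1; module
    _ ≤ |a + c| / 2 * ‖u + v‖ + |a - c| / 2 * ‖u - v‖ := by
        grw [norm_add_le, norm_smul, norm_smul, Real.norm_eq_abs, Real.norm_eq_abs, abs_div,
          abs_div, abs_two]
    _ ≤ max |a| |c| := by
        have := abs_add_add_abs_sub_le_two_mul_max a c
        nlinarith [abs_nonneg (a + c), abs_nonneg (a - c)]

lemma two_mul_abs_le_norm_smul_add_smul_add_max (hu : ‖u‖ = 1) (h₁ : ‖u + v‖ ≤ 1)
    (h₂ : ‖u - v‖ ≤ 1) (a c : ℝ) :
    2 * |a| ≤ ‖a • u + c • v‖ + max |a| |c| :=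
  calc 2 * |a| = ‖(a • u + c • v) + (a • u + (-c) • v)‖ := by
        rw [show (a • u + c • v) + (a • u + (-c) • v) = (2 * a) • u by module, norm_smul, hu,
          Real.norm_eq_abs, abs_mul, abs_two, mul_one]
    _ ≤ ‖a • u + c • v‖ + max |a| |-c| := by
        grw [norm_add_le, norm_smul_add_smul_le_max h₁ h₂ a (-c)]
    _ = ‖a • u + c • v‖ + max |a| |c| := by rw [abs_neg]

lemma norm_smul_add_smul_eq_max (hu : ‖u‖ = 1) (hv : ‖v‖ = 1) (h₁ : ‖u + v‖ ≤ 1)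
    (h₂ : ‖u - v‖ ≤ 1) (a c : ℝ) :
    ‖a • u + c • v‖ = max |a| |c| := by
  have h₁' : ‖v + u‖ ≤ 1 := by rwa [add_comm]
  have h₂' : ‖v - u‖ ≤ 1 := by rwa [norm_sub_rev]
  have ha := two_mul_abs_le_norm_smul_add_smul_add_max hu h₁ h₂ a c
  have hc := two_mul_abs_le_norm_smul_add_smul_add_max hv h₁' h₂' c a
  rw [add_comm (c • v), max_comm] at hc
  refine le_antisymm (norm_smul_add_smul_le_max h₁ h₂ a c) ?_
  cases max_cases |a| |c| <;> linarith

lemma perpInf_iff_of_norm_eq_one (hu : ‖u‖ = 1) (hv : ‖v‖ = 1) :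
    PerpInf u v ↔ ‖u + v‖ = 1 ∧ ‖u - v‖ = 1 := by
  refine ⟨fun h => ⟨?_, ?_⟩, fun ⟨h₁, h₂⟩ k => ?_⟩
  · simpa [hu, hv] using h 1
  · simpa [hu, hv, ← sub_eq_add_neg] using h (-1)
  · simpa [hu, hv, norm_smul] using
      norm_smul_add_smul_eq_max hu hv h₁.le h₂.le 1 k

end UnitVectors

theorem perpInf_iff_general {X : Type*} [NormedAddCommGroup X] [NormedSpace ℝ X]
    (x y : X) (hx : x ≠ 0) (hy : y ≠ 0) :
    PerpInf x y ↔ (‖‖x‖⁻¹ • x + ‖y‖⁻¹ • y‖ = 1 ∧ ‖‖x‖⁻¹ • x - ‖y‖⁻¹ • y‖ = 1) := by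
  have hx' : ‖x‖⁻¹ ≠ 0 := inv_ne_zero (norm_ne_zero_iff.mpr hx)
  have hy' : ‖y‖⁻¹ ≠ 0 := inv_ne_zero (norm_ne_zero_iff.mpr hy)
  rw [← PerpInf.smul_left_iff hx', ← PerpInf.smul_right_iff hy']
  exact perpInf_iff_of_norm_eq_one (norm_smul_inv_norm hx) (norm_smul_inv_norm hy)

theorem perpInf_iff {X : Type*} [NormedAddCommGroup X] [NormedSpace ℝ X] [Nontrivial X]
    (x y : X) (hx : x ≠ 0) (hy : y ≠ 0) :
    PerpInf x y ↔ (‖‖x‖⁻¹ • x + ‖y‖⁻¹ • y‖ = 1 ∧ ‖‖x‖⁻¹ • x - ‖y‖⁻¹ • y‖ = 1) :=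
  perpInf_iff_general x y hx hy
end

section
/- Let A be a C*-algebra and let a, b ∈ A with a ≥ 0 and b ≥ 0. Then a b = 0 if and only if for every c ∈ A with −a ≤ c ≤ a and every d ∈ A with −b ≤ d ≤ b, one has c ⊥∞ d (i.e., ‖c + k d‖ = max{‖c‖, ‖k d‖} for all k ∈ ℝ). -/
/-!
If `a * b = 0`, then `star b * a * b = 0`; for `-a ≤ c ≤ a` the two positive elements
`star b * (a ∓ c) * b` add up to zero, so `c * b = 0`, and the same argument once more gives
`d * c = 0`. Self-adjoint elements with zero product satisfy `‖c + d‖ = max ‖c‖ ‖d‖`.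

Conversely, let `c = min a δ` and `d = min b δ` (functional calculus), so that `u = a - c` and
`v = b - d` satisfy `u * c = δ • u` and `v * d = δ • v`. For `x = u * v`,
`star x * (c + d) * x ≤ ‖c + d‖ • star x * x ≤ δ • star x * x = star x * c * x`, so
`star x * d * x = 0`, hence `d * x = 0`, `v * u * v = 0` and finally `u * v = 0`. Expanding
`a * b` around `u * v = 0` gives `‖a * b‖ ≤ δ * (‖a‖ + ‖b‖)` for every `δ > 0`.
-/

lemma PerpInf.of_mul_eq_zero {A : Type*} [NonUnitalCStarAlgebra A] {c d : A}
    (hc : IsSelfAdjoint c) (hd : IsSelfAdjoint d) (hcd : c * d = 0) : PerpInf c d := fun k =>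
  hc.norm_add_eq_max ((IsSelfAdjoint.all k).smul hd) (by rw [mul_smul_comm, hcd, smul_zero])

section Cutoff

variable {A : Type*} [NonUnitalCStarAlgebra A] {δ : ℝ} {a : A}

noncomputable def cutoff (δ : ℝ) (a : A) : A := cfcₙ (fun t : ℝ => min t δ) a

lemma sub_cutoff_eq (hδ : 0 ≤ δ) (ha : IsSelfAdjoint a) :
    a - cutoff δ a = cfcₙ (fun t : ℝ => max (t - δ) 0) a := by
  rw [cutoff]
  nth_rw 1 [← cfcₙ_id' ℝ a]
  rw [← cfcₙ_sub _ _ a]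
  refine cfcₙ_congr fun t _ => ?_
  rcases le_total t δ with h | h
  · simp [min_eq_left h, max_eq_right (sub_nonpos.mpr h)]
  · simp [min_eq_right h, max_eq_left (sub_nonneg.mpr h)]

lemma sub_cutoff_mul_cutoff (hδ : 0 ≤ δ) (ha : IsSelfAdjoint a) :
    (a - cutoff δ a) * cutoff δ a = δ • (a - cutoff δ a) := by
  rw [sub_cutoff_eq hδ ha, cutoff, ← cfcₙ_mul _ _ a, ← cfcₙ_smul δ _ a]
  refine cfcₙ_congr fun t _ => ?_
  rcases le_total t δ with h | h
  · simp [min_eq_left h, max_eq_right (sub_nonpos.mpr h)]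
  · simp [min_eq_right h, max_eq_left (sub_nonneg.mpr h), mul_comm]

variable [PartialOrder A] [StarOrderedRing A]

lemma cutoff_nonneg (hδ : 0 ≤ δ) (ha : 0 ≤ a) : 0 ≤ cutoff δ a :=
  cfcₙ_nonneg fun t ht => le_min (quasispectrum_nonneg_of_nonneg a ha t ht) hδ

lemma cutoff_le (hδ : 0 ≤ δ) (ha : IsSelfAdjoint a) : cutoff δ a ≤ a := by
  rw [← sub_nonneg, sub_cutoff_eq hδ ha]
  exact cfcₙ_nonneg fun t _ => le_max_right _ _

lemma norm_cutoff_le (hδ : 0 ≤ δ) (ha : 0 ≤ a) : ‖cutoff δ a‖ ≤ δ :=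
  norm_cfcₙ_le fun t ht => by
    rw [Real.norm_of_nonneg (le_min (quasispectrum_nonneg_of_nonneg a ha t ht) hδ)]
    exact min_le_right _ _

end Cutoff

section Orthogonality

variable {A : Type*} [NonUnitalCStarAlgebra A] [PartialOrder A] [StarOrderedRing A]

lemma mul_eq_zero_of_star_mul_mul_eq_zero {w z : A} (hw : 0 ≤ w) (h : star z * w * z = 0) :
    w * z = 0 := by
  obtain ⟨s, rfl⟩ := CStarAlgebra.nonneg_iff_eq_star_mul_self.mp hw
  have hsz : s * z = 0 := (CStarRing.star_mul_self_eq_zero_iff _).mp <| by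
    simpa only [star_mul, mul_assoc] using h
  rw [mul_assoc, hsz, mul_zero]

lemma mul_eq_zero_of_star_mul_mul_eq_zero_of_neg_le_of_le {b d z : A} (hb : 0 ≤ b)
    (hz : star z * b * z = 0) (hbd : -b ≤ d) (hdb : d ≤ b) : d * z = 0 := by
  have hdz : star z * d * z = 0 := by
    refine le_antisymm ?_ ?_
    · have := star_left_conjugate_nonneg (sub_nonneg.mpr hdb) z
      rwa [mul_sub, sub_mul, hz, zero_sub, neg_nonneg] at this
    · have := star_left_conjugate_nonneg (neg_le_iff_add_nonneg.mp hbd) z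
      rwa [mul_add, add_mul, hz, add_zero] at this
  have hsub : (b - d) * z = 0 := mul_eq_zero_of_star_mul_mul_eq_zero (sub_nonneg.mpr hdb) <| by
    rw [mul_sub, sub_mul, hz, hdz, sub_zero]
  rwa [sub_mul, mul_eq_zero_of_star_mul_mul_eq_zero hb hz, zero_sub, neg_eq_zero] at hsub

lemma mul_eq_zero_of_neg_le_of_le {a b c d : A} (ha : 0 ≤ a) (hb : 0 ≤ b) (hab : a * b = 0)
    (hac : -a ≤ c) (hca : c ≤ a) (hbd : -b ≤ d) (hdb : d ≤ b) : c * d = 0 := by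
  have hc : IsSelfAdjoint c := ha.isSelfAdjoint.of_le hca
  have hcb : c * b = 0 := mul_eq_zero_of_star_mul_mul_eq_zero_of_neg_le_of_le ha
    (by rw [hb.isSelfAdjoint.star_eq, mul_assoc, hab, mul_zero]) hac hca
  have hdc : d * c = 0 := mul_eq_zero_of_star_mul_mul_eq_zero_of_neg_le_of_le hb
    (by rw [hc.star_eq, hcb, zero_mul]) hbd hdb
  simpa [hc.star_eq, (hb.isSelfAdjoint.of_le hdb).star_eq] using congr(star $hdc)

lemma mul_eq_zero_of_norm_add_le {c d u v : A} {δ : ℝ} (hδ : δ ≠ 0) (hc : IsSelfAdjoint c)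
    (hd : 0 ≤ d) (hu : 0 ≤ u) (hv : IsSelfAdjoint v) (hcd : ‖c + d‖ ≤ δ)
    (huc : u * c = δ • u) (hvd : v * d = δ • v) : u * v = 0 := by
  set x := u * v
  have hx : star x = v * u := by rw [star_mul, hu.isSelfAdjoint.star_eq, hv.star_eq]
  have hxcx : star x * c * x = δ • (star x * x) := by
    rw [hx, show v * u * c * (u * v) = v * (u * c) * (u * v) by simp only [mul_assoc], huc,
      mul_smul_comm, smul_mul_assoc]
  have hxdx : star x * d * x = 0 := by
    refine le_antisymm ?_ (star_left_conjugate_nonneg hd x)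
    have := (CStarAlgebra.star_left_conjugate_le_norm_smul (a := x) (hc.add hd.isSelfAdjoint)).trans
      (smul_le_smul_of_nonneg_right hcd (star_mul_self_nonneg x))
    rwa [mul_add, add_mul, hxcx, add_le_iff_nonpos_right] at this
  have hvuv : star v * u * v = 0 := by
    have : v * (d * x) = 0 := by rw [mul_eq_zero_of_star_mul_mul_eq_zero hd hxdx, mul_zero]
    rw [← mul_assoc, hvd, smul_mul_assoc, smul_eq_zero_iff_right hδ] at this
    rw [hv.star_eq, mul_assoc]
    exact this
  exact mul_eq_zero_of_star_mul_mul_eq_zero hu hvuv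

lemma norm_mul_le_of_norm_cutoff_add_le {a b : A} {δ : ℝ} (hδ : 0 < δ) (ha : 0 ≤ a) (hb : 0 ≤ b)
    (h : ‖cutoff δ a + cutoff δ b‖ ≤ δ) : ‖a * b‖ ≤ δ * (‖a‖ + ‖b‖) := by
  set c := cutoff δ a
  set d := cutoff δ b
  have hc : 0 ≤ c := cutoff_nonneg hδ.le ha
  have hd : 0 ≤ d := cutoff_nonneg hδ.le hb
  have huv : (a - c) * (b - d) = 0 := mul_eq_zero_of_norm_add_le hδ.ne' hc.isSelfAdjoint
    hd (sub_nonneg.mpr (cutoff_le hδ.le ha.isSelfAdjoint))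
    (hb.isSelfAdjoint.sub hd.isSelfAdjoint) h
    (sub_cutoff_mul_cutoff hδ.le ha.isSelfAdjoint) (sub_cutoff_mul_cutoff hδ.le hb.isSelfAdjoint)
  have hu : ‖a - c‖ ≤ ‖a‖ := CStarAlgebra.norm_le_norm_of_nonneg_of_le
    (sub_nonneg.mpr (cutoff_le hδ.le ha.isSelfAdjoint)) (sub_le_self a hc)
  calc ‖a * b‖ = ‖c * b + (a - c) * d‖ := by
        rw [show a * b = c * b + (a - c) * d + (a - c) * (b - d) by noncomm_ring, huv, add_zero]
    _ ≤ ‖c‖ * ‖b‖ + ‖a - c‖ * ‖d‖ := norm_add_le_of_le (norm_mul_le _ _) (norm_mul_le _ _)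
    _ ≤ δ * ‖b‖ + ‖a‖ * δ := by
        gcongr
        exacts [norm_cutoff_le hδ.le ha, norm_cutoff_le hδ.le hb]
    _ = δ * (‖a‖ + ‖b‖) := by ring

open Filter Topology in
lemma mul_eq_zero_of_forall_norm_cutoff_add_le {a b : A} (ha : 0 ≤ a) (hb : 0 ≤ b)
    (h : ∀ δ > 0, ‖cutoff δ a + cutoff δ b‖ ≤ δ) : a * b = 0 := by
  have hlim : Tendsto (fun δ : ℝ => δ * (‖a‖ + ‖b‖)) (𝓝[>] 0) (𝓝 0) := by
    simpa using ((continuous_mul_const (‖a‖ + ‖b‖)).tendsto 0).mono_left nhdsWithin_le_nhds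
  refine norm_le_zero_iff.mp (ge_of_tendsto hlim (eventually_nhdsWithin_of_forall ?_))
  exact fun δ hδ => norm_mul_le_of_norm_cutoff_add_le hδ ha hb (h δ hδ)

end Orthogonality

theorem mul_eq_zero_iff_extensively_perpInf {A : Type*} [NonUnitalCStarAlgebra A]
    [PartialOrder A] [StarOrderedRing A] (a b : A) (ha : 0 ≤ a) (hb : 0 ≤ b) :
    a * b = 0 ↔
      ∀ c : A, -a ≤ c → c ≤ a → ∀ d : A, -b ≤ d → d ≤ b → PerpInf c d := by
  refine ⟨fun hab c hac hca d hbd hdb => ?_, fun H => ?_⟩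
  · exact .of_mul_eq_zero (ha.isSelfAdjoint.of_le hca) (hb.isSelfAdjoint.of_le hdb)
      (mul_eq_zero_of_neg_le_of_le ha hb hab hac hca hbd hdb)
  refine mul_eq_zero_of_forall_norm_cutoff_add_le ha hb fun δ hδ => ?_
  have hc := cutoff_nonneg hδ.le ha
  have hd := cutoff_nonneg hδ.le hb
  have hperp := H _ ((neg_nonpos.mpr ha).trans hc) (cutoff_le hδ.le ha.isSelfAdjoint)
    _ ((neg_nonpos.mpr hb).trans hd) (cutoff_le hδ.le hb.isSelfAdjoint) 1
  rw [one_smul] at hperp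
  exact hperp.trans_le (max_le (norm_cutoff_le hδ.le ha) (norm_cutoff_le hδ.le hb))
end

section
/- Let X be a non-zero real normed linear space, let x ∈ X with ‖x‖ = 1/2, and let X̃ = ℝ ⊕₁ X with norm ‖(α, x)‖ = |α| + ‖x‖ and positive cone X̃⁺ = {(α, x) : ‖x‖ ≤ α}. Then (1/2, x) has the order unit property in X̃ if and only if {(β, z) ∈ X̃ : there exists λ > 0 with λ (1/2, x) + (β, z) ∈ X̃⁺ and λ (1/2, x) − (β, z) ∈ X̃⁺} = ℝ · (1/2, x). -/
/-! If `u = (α, y)` is positive with `0 < α < 1` and has the order unit property, every `(0, w)` in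
the order ideal of `u` is forced to vanish: the property gives `‖‖w‖ y ± w‖ ≤ ‖w‖ α`, whence
`2‖w‖ ≤ 2α‖w‖`. Since subtracting multiples of `u` stays inside the ideal, the ideal is `ℝ u`.
Conversely, if the ideal is `ℝ u` and `‖u‖ ≥ 1`, the property reduces to positivity of the
multiples `(|t|‖u‖ ± t) u`. For `u = (1/2, x)` with `‖x‖ = 1/2` both apply. -/

section Adjoin

variable {X : Type*} [NormedAddCommGroup X] [NormedSpace ℝ X]

/-- Membership in the positive cone of `X̃ = ℝ ⊕₁ X`: `(α, x) ∈ X̃⁺` iff `‖x‖ ≤ α`. -/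
def tildePos (p : ℝ × X) : Prop := ‖p.2‖ ≤ p.1

/-- The norm of `X̃ = ℝ ⊕₁ X`: `‖(α, x)‖ = |α| + ‖x‖`. -/
noncomputable def tildeNorm (p : ℝ × X) : ℝ := |p.1| + ‖p.2‖

/-- `u ∈ X̃⁺` has the order unit property in `X̃`: whenever `λ u + v ∈ X̃⁺` and
`λ u - v ∈ X̃⁺` for some `λ > 0`, also `‖v‖ u + v ∈ X̃⁺` and `‖v‖ u - v ∈ X̃⁺`. -/
noncomputable def tildeHasOUP (u : ℝ × X) : Prop :=
  ∀ v : ℝ × X, (∃ l : ℝ, 0 < l ∧ tildePos (l • u + v) ∧ tildePos (l • u - v)) →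
    tildePos (tildeNorm v • u + v) ∧ tildePos (tildeNorm v • u - v)

end Adjoin

section OrderIdeal

variable {X : Type*} [NormedAddCommGroup X]

theorem tildePos_add {p q : ℝ × X} (hp : tildePos p) (hq : tildePos q) : tildePos (p + q) :=
  (norm_add_le p.2 q.2).trans (add_le_add hp hq)

variable [NormedSpace ℝ X]

def tildeOrderIdeal (u : ℝ × X) : Set (ℝ × X) :=
  {v | ∃ l : ℝ, 0 < l ∧ tildePos (l • u + v) ∧ tildePos (l • u - v)}

theorem tildePos_smul {p : ℝ × X} (hp : tildePos p) {s : ℝ} (hs : 0 ≤ s) :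
    tildePos (s • p) := by
  change ‖s • p.2‖ ≤ s * p.1
  rw [norm_smul, Real.norm_of_nonneg hs]
  exact mul_le_mul_of_nonneg_left hp hs

theorem tildeNorm_smul (t : ℝ) (p : ℝ × X) : tildeNorm (t • p) = |t| * tildeNorm p := by
  simp only [tildeNorm, Prod.smul_fst, Prod.smul_snd, smul_eq_mul, abs_mul, norm_smul,
    Real.norm_eq_abs]
  ring

variable {u : ℝ × X}

theorem smul_mem_tildeOrderIdeal (hu : tildePos u) (t : ℝ) : t • u ∈ tildeOrderIdeal u := by
  refine ⟨|t| + 1, by positivity, ?_, ?_⟩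
  · rw [← add_smul]
    exact tildePos_smul hu (by linarith [neg_abs_le t])
  · rw [← sub_smul]
    exact tildePos_smul hu (by linarith [le_abs_self t])

theorem sub_smul_mem_tildeOrderIdeal (hu : tildePos u) {v : ℝ × X} (hv : v ∈ tildeOrderIdeal u)
    (t : ℝ) : v - t • u ∈ tildeOrderIdeal u := by
  obtain ⟨l, hl, hplus, hminus⟩ := hv
  refine ⟨l + |t|, by positivity, ?_, ?_⟩
  · have h : (l + |t|) • u + (v - t • u) = (l • u + v) + (|t| - t) • u := by module
    rw [h]
    exact tildePos_add hplus (tildePos_smul hu (by linarith [le_abs_self t]))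
  · have h : (l + |t|) • u - (v - t • u) = (l • u - v) + (|t| + t) • u := by module
    rw [h]
    exact tildePos_add hminus (tildePos_smul hu (by linarith [neg_abs_le t]))

theorem eq_zero_of_tildeHasOUP (hOUP : tildeHasOUP u) (hu : u.1 < 1) {w : X}
    (hw : ((0 : ℝ), w) ∈ tildeOrderIdeal u) : w = 0 := by
  obtain ⟨hplus, hminus⟩ := hOUP _ hw
  simp only [tildePos, tildeNorm, Prod.smul_fst, Prod.smul_snd, Prod.fst_add, Prod.snd_add,
    Prod.fst_sub, Prod.snd_sub, smul_eq_mul, abs_zero, zero_add, add_zero, sub_zero]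
    at hplus hminus
  have htwo : 2 * ‖w‖ ≤ 2 * (‖w‖ * u.1) :=
    calc 2 * ‖w‖ = ‖(‖w‖ • u.2 + w) - (‖w‖ • u.2 - w)‖ := by
          rw [add_sub_sub_cancel, ← two_smul ℝ w, norm_smul, Real.norm_two]
      _ ≤ ‖‖w‖ • u.2 + w‖ + ‖‖w‖ • u.2 - w‖ := norm_sub_le _ _
      _ ≤ 2 * (‖w‖ * u.1) := by linarith
  exact norm_le_zero_iff.mp (by nlinarith [norm_nonneg w])

theorem eq_smul_of_tildeHasOUP (hOUP : tildeHasOUP u) (hu : tildePos u) (hu₀ : 0 < u.1)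
    (hu₁ : u.1 < 1) {v : ℝ × X} (hv : v ∈ tildeOrderIdeal u) : v = (v.1 / u.1) • u := by
  have hfst : (v - (v.1 / u.1) • u).1 = 0 := by
    simp only [Prod.fst_sub, Prod.smul_fst, smul_eq_mul]
    field_simp
    ring
  have hmem := sub_smul_mem_tildeOrderIdeal hu hv (v.1 / u.1)
  rw [← Prod.mk.eta (p := v - _), hfst] at hmem
  exact sub_eq_zero.mp (Prod.ext hfst (eq_zero_of_tildeHasOUP hOUP hu₁ hmem))

theorem tildeHasOUP_of_forall_eq_smul (hu : tildePos u) (hnorm : 1 ≤ tildeNorm u)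
    (hspan : ∀ v ∈ tildeOrderIdeal u, ∃ t : ℝ, v = t • u) : tildeHasOUP u := by
  intro v hv
  obtain ⟨t, rfl⟩ := hspan v hv
  have hscale : |t| ≤ |t| * tildeNorm u := le_mul_of_one_le_right (abs_nonneg t) hnorm
  rw [tildeNorm_smul, ← add_smul, ← sub_smul]
  exact ⟨tildePos_smul hu (by linarith [neg_abs_le t]),
    tildePos_smul hu (by linarith [le_abs_self t])⟩

end OrderIdeal

theorem tilde_hasOUP_iff_general {X : Type*} [NormedAddCommGroup X] [NormedSpace ℝ X]
    (x : X) (hx : ‖x‖ = 1 / 2) :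
    tildeHasOUP ((1 / 2 : ℝ), x) ↔
      {v : ℝ × X | ∃ l : ℝ, 0 < l ∧ tildePos (l • ((1 / 2 : ℝ), x) + v) ∧
          tildePos (l • ((1 / 2 : ℝ), x) - v)} =
        {v : ℝ × X | ∃ t : ℝ, v = t • ((1 / 2 : ℝ), x)} := by
  have hu : tildePos ((1 / 2 : ℝ), x) := hx.le
  have hnorm : tildeNorm ((1 / 2 : ℝ), x) = 1 := by
    rw [tildeNorm, hx]
    norm_num
  change _ ↔ tildeOrderIdeal _ = _
  constructor
  · intro hOUP
    ext v
    refine ⟨fun hv => ⟨_, eq_smul_of_tildeHasOUP hOUP hu (by norm_num) (by norm_num) hv⟩, ?_⟩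
    rintro ⟨t, rfl⟩
    exact smul_mem_tildeOrderIdeal hu t
  · intro hideal
    exact tildeHasOUP_of_forall_eq_smul hu hnorm.ge fun v hv => hideal.subset hv

theorem tilde_hasOUP_iff {X : Type*} [NormedAddCommGroup X] [NormedSpace ℝ X] [Nontrivial X]
    (x : X) (hx : ‖x‖ = 1 / 2) :
    tildeHasOUP ((1 / 2 : ℝ), x) ↔
      {v : ℝ × X | ∃ l : ℝ, 0 < l ∧ tildePos (l • ((1 / 2 : ℝ), x) + v) ∧
          tildePos (l • ((1 / 2 : ℝ), x) - v)} =
        {v : ℝ × X | ∃ t : ℝ, v = t • ((1 / 2 : ℝ), x)} :=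
  tilde_hasOUP_iff_general x hx
end
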